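/- arXiv:2404.06980 — 6 statements merged into one kernel-verified Lean document; each statement's English description precedes it below -/
import Mathlib

section
/- Let Ω ⊆ ℝ² be open and simply connected, A : Ω → ℝ²ˣ² a smooth symmetric uniformly elliptic matrix field, u smooth with div(A∇u) = 0 on Ω, and ū smooth satisfying ∇ū = J A ∇u on Ω, where J is rotation by π/2. Then ū satisfies div((A/det A)∇ū) = 0 on Ω. -/
open Matrix

/-- Partial derivative in the first variable. -/
noncomputable def px (f : ℝ × ℝ → ℝ) (p : ℝ × ℝ) : ℝ := fderiv ℝ f p (1, 0)

/-- Partial derivative in the second variable. -/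
noncomputable def py (f : ℝ × ℝ → ℝ) (p : ℝ × ℝ) : ℝ := fderiv ℝ f p (0, 1)

/-- Gradient as a `Fin 2`-indexed vector. -/
noncomputable def grad2 (f : ℝ × ℝ → ℝ) (p : ℝ × ℝ) : Fin 2 → ℝ := ![px f p, py f p]

/-- Divergence of a `Fin 2`-indexed vector field on `ℝ²`. -/
noncomputable def dvg2 (F : ℝ × ℝ → (Fin 2 → ℝ)) (p : ℝ × ℝ) : ℝ :=
  fderiv ℝ (fun q => F q 0) p (1, 0) + fderiv ℝ (fun q => F q 1) p (0, 1)

/-- For a symmetric 2×2 matrix `M` and the rotation `J`, one has `M J M = (det M) J`. -/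
lemma matJ_aux (M : Matrix (Fin 2) (Fin 2) ℝ) (hM : M 1 0 = M 0 1) (g : Fin 2 → ℝ) :
    M *ᵥ ((!![0,1;-1,0] : Matrix (Fin 2) (Fin 2) ℝ) *ᵥ (M *ᵥ g)) =
      M.det • ((!![0,1;-1,0] : Matrix (Fin 2) (Fin 2) ℝ) *ᵥ g) := by
  funext i
  fin_cases i <;>
    simp [Matrix.mulVec, dotProduct, Matrix.det_fin_two, Fin.sum_univ_two, hM] <;> ring

/-- A symmetric elliptic 2×2 matrix has positive determinant. -/
lemma det_pos_aux (M : Matrix (Fin 2) (Fin 2) ℝ) (hM : M 1 0 = M 0 1) (lam : ℝ) (hlam : 0 < lam)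
    (h : ∀ ξ : Fin 2 → ℝ, lam * (ξ 0 ^ 2 + ξ 1 ^ 2) ≤ (M *ᵥ ξ) ⬝ᵥ ξ) : 0 < M.det := by
  have h1 := h ![0, 1]
  have h2 := h ![M 1 1, -(M 0 1)]
  simp [Matrix.mulVec, dotProduct, Fin.sum_univ_two, hM] at h1 h2
  have hc : 0 < M 1 1 := lt_of_lt_of_le hlam (by linarith)
  rw [Matrix.det_fin_two, hM]
  nlinarith [sq_nonneg (M 0 1), sq_nonneg (M 1 1), mul_pos hlam (mul_pos hc hc)]

/-- Antisymmetry of the mixed second partials in divergence form. -/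
lemma mixed_partials_aux (u : ℝ × ℝ → ℝ) (Ω : Set (ℝ × ℝ)) (hΩ : IsOpen Ω)
    (hu : ContDiffOn ℝ (⊤ : ℕ∞) u Ω) (p : ℝ × ℝ) (hp : p ∈ Ω) :
    fderiv ℝ (fun q => py u q) p (1,0) + fderiv ℝ (fun q => -(px u q)) p (0,1) = 0 := by
  have hdiff : ∀ᶠ q in nhds p, HasFDerivAt u (fderiv ℝ u q) q := by
    filter_upwards [hΩ.mem_nhds hp] with q hq
    exact ((hu.contDiffAt (hΩ.mem_nhds hq)).differentiableAt (by simp)).hasFDerivAt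
  have hf' : DifferentiableAt ℝ (fderiv ℝ u) p :=
    ((hu.contDiffAt (hΩ.mem_nhds hp)).fderiv_right (m := 1) (WithTop.coe_le_coe.mpr le_top)).differentiableAt one_ne_zero
  have hsym := second_derivative_symmetric_of_eventually hdiff hf'.hasFDerivAt
    ((1:ℝ),(0:ℝ)) ((0:ℝ),(1:ℝ))
  have e1 : ∀ v : ℝ × ℝ, fderiv ℝ (fun q => fderiv ℝ u q v) p
      = (fderiv ℝ (fderiv ℝ u) p).flip v := by
    intro v
    have := fderiv_clm_apply (c := fderiv ℝ u) (u := fun _ => v) hf' (differentiableAt_const v)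
    simpa using this
  have epx : (fun q => -(px u q)) = fun q => -(fderiv ℝ u q (1,0)) := rfl
  have epy : (fun q => py u q) = fun q => fderiv ℝ u q (0,1) := rfl
  rw [epx, epy, fderiv_fun_neg, e1, e1]
  simp [ContinuousLinearMap.flip_apply, hsym]

/-- If `u` solves `div(A∇u) = 0` on an open simply connected `Ω ⊆ ℝ²`, with `A` smooth,
symmetric and uniformly elliptic, and `ubar` is smooth with `∇ubar = J A ∇u` on `Ω`, then
`ubar` solves `div((A/det A)∇ubar) = 0` on `Ω`. -/
theorem statement_4 (Ω : Set (ℝ × ℝ)) (hΩ : IsOpen Ω) (hsc : SimplyConnectedSpace Ω)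
    (A : ℝ × ℝ → Matrix (Fin 2) (Fin 2) ℝ)
    (hAsmooth : ∀ i j, ContDiffOn ℝ (⊤ : ℕ∞) (fun p => A p i j) Ω)
    (hAsymm : ∀ p ∈ Ω, (A p).IsSymm)
    (hell : ∃ lam Lam : ℝ, 0 < lam ∧ lam ≤ Lam ∧ ∀ p ∈ Ω, ∀ ξ : Fin 2 → ℝ,
      lam * (ξ 0 ^ 2 + ξ 1 ^ 2) ≤ (A p *ᵥ ξ) ⬝ᵥ ξ ∧ (A p *ᵥ ξ) ⬝ᵥ ξ ≤ Lam * (ξ 0 ^ 2 + ξ 1 ^ 2))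
    (u ubar : ℝ × ℝ → ℝ)
    (hu : ContDiffOn ℝ (⊤ : ℕ∞) u Ω) (hubar : ContDiffOn ℝ (⊤ : ℕ∞) ubar Ω)
    (hequ : ∀ p ∈ Ω, dvg2 (fun q => A q *ᵥ grad2 u q) p = 0)
    (hconj : ∀ p ∈ Ω, grad2 ubar p = (!![0, 1; -1, 0] : Matrix (Fin 2) (Fin 2) ℝ) *ᵥ (A p *ᵥ grad2 u p)) :
    ∀ p ∈ Ω, dvg2 (fun q => ((A q).det)⁻¹ • (A q *ᵥ grad2 ubar q)) p = 0 := by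
  obtain ⟨lam, Lam, hlam, -, hell⟩ := hell
  have hsymm : ∀ q ∈ Ω, A q 1 0 = A q 0 1 := by
    intro q hq
    have h := hAsymm q hq
    rw [Matrix.IsSymm] at h
    exact (congrFun (congrFun h 1) 0).symm ▸ rfl
  have hdet : ∀ q ∈ Ω, 0 < (A q).det := fun q hq =>
    det_pos_aux (A q) (hsymm q hq) lam hlam (fun ξ => (hell q hq ξ).1)
  have key : ∀ q ∈ Ω, ((A q).det)⁻¹ • (A q *ᵥ grad2 ubar q) = ![py u q, -(px u q)] := by
    intro q hq
    rw [hconj q hq, matJ_aux (A q) (hsymm q hq), smul_smul,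
      inv_mul_cancel₀ (hdet q hq).ne', one_smul]
    funext i
    fin_cases i <;>
      simp [grad2, Matrix.mulVec, dotProduct, Fin.sum_univ_two]
  intro p hp
  have h0 : (fun q => (((A q).det)⁻¹ • (A q *ᵥ grad2 ubar q)) 0) =ᶠ[nhds p]
      fun q => py u q := by
    filter_upwards [hΩ.mem_nhds hp] with q hq
    rw [key q hq]; simp
  have h1 : (fun q => (((A q).det)⁻¹ • (A q *ᵥ grad2 ubar q)) 1) =ᶠ[nhds p]
      fun q => -(px u q) := by
    filter_upwards [hΩ.mem_nhds hp] with q hq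
    rw [key q hq]; simp
  show fderiv ℝ _ p (1,0) + fderiv ℝ _ p (0,1) = 0
  rw [h0.fderiv_eq, h1.fderiv_eq]
  exact mixed_partials_aux u Ω hΩ hu p hp
end

section
/- Fix a > −1 and consider, in ℝ², a smooth function w̄ defined on an open subset of the upper half-plane {y > 0} satisfying div(y^a ∇w̄) = 0, i.e. y Δw̄ + a ∂_y w̄ = 0. Let u be harmonic on a simply connected open Ω ⊆ ℝ², ū a harmonic conjugate of u, and suppose u > 0 on Ω. Then w := w̄ ∘ Θ with Θ = (ū, u) satisfies div(u^a ∇w) = 0 on Ω, i.e. u Δw + a ∇u·∇w = 0. -/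
/-- Laplacian in two dimensions. -/
noncomputable def lap (f : ℝ × ℝ → ℝ) (p : ℝ × ℝ) : ℝ := px (px f) p + py (py f) p

section helpers

noncomputable def pd (v : ℝ × ℝ) (f : ℝ × ℝ → ℝ) (p : ℝ × ℝ) : ℝ := fderiv ℝ f p v

lemma px_eq (f : ℝ × ℝ → ℝ) : px f = pd (1,0) f := rfl
lemma py_eq (f : ℝ × ℝ → ℝ) : py f = pd (0,1) f := rfl
lemma lap_eq (f : ℝ × ℝ → ℝ) (p : ℝ × ℝ) :
    lap f p = pd (1,0) (pd (1,0) f) p + pd (0,1) (pd (0,1) f) p := rfl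

lemma clm_apply_eq (L : (ℝ × ℝ) →L[ℝ] ℝ) (v : ℝ × ℝ) :
    L v = v.1 * L (1, 0) + v.2 * L (0, 1) := by
  have hv : v = v.1 • ((1:ℝ), (0:ℝ)) + v.2 • ((0:ℝ), (1:ℝ)) := by
    simp [Prod.ext_iff]
  calc L v = L (v.1 • ((1:ℝ), (0:ℝ)) + v.2 • ((0:ℝ), (1:ℝ))) := by rw [← hv]
    _ = v.1 * L (1, 0) + v.2 * L (0, 1) := by
        rw [map_add, map_smul, map_smul]; simp [smul_eq_mul]

lemma diffAt_of_contDiffOn {f : ℝ × ℝ → ℝ} {s : Set (ℝ × ℝ)} (hf : ContDiffOn ℝ (⊤ : ℕ∞) f s)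
    (hs : IsOpen s) {p : ℝ × ℝ} (hp : p ∈ s) : DifferentiableAt ℝ f p :=
  (hf.contDiffAt (hs.mem_nhds hp)).differentiableAt (by simp)

lemma pd_contDiffOn {f : ℝ × ℝ → ℝ} {s : Set (ℝ × ℝ)} (hf : ContDiffOn ℝ (⊤ : ℕ∞) f s)
    (hs : IsOpen s) (v : ℝ × ℝ) : ContDiffOn ℝ (⊤ : ℕ∞) (pd v f) s :=
  (hf.fderiv_of_isOpen hs (by simp)).clm_apply contDiffOn_const

lemma pd_comp {f g1 g2 : ℝ × ℝ → ℝ} {p : ℝ × ℝ} (v : ℝ × ℝ)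
    (hf : DifferentiableAt ℝ f (g1 p, g2 p)) (h1 : DifferentiableAt ℝ g1 p)
    (h2 : DifferentiableAt ℝ g2 p) :
    pd v (fun q => f (g1 q, g2 q)) p
      = pd v g1 p * pd (1,0) f (g1 p, g2 p) + pd v g2 p * pd (0,1) f (g1 p, g2 p) := by
  have hΘ : HasFDerivAt (fun q => (g1 q, g2 q))
      ((fderiv ℝ g1 p).prod (fderiv ℝ g2 p)) p :=
    h1.hasFDerivAt.prodMk h2.hasFDerivAt
  have hc := (hf.hasFDerivAt.comp p hΘ).fderiv
  have : pd v (fun q => f (g1 q, g2 q)) p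
      = fderiv ℝ f (g1 p, g2 p) (fderiv ℝ g1 p v, fderiv ℝ g2 p v) := by
    unfold pd
    rw [show (fun q => f (g1 q, g2 q)) = f ∘ (fun q => (g1 q, g2 q)) from rfl, hc]; rfl
  rw [this, clm_apply_eq]; rfl

lemma pd_mul {f g : ℝ × ℝ → ℝ} {p : ℝ × ℝ} (v : ℝ × ℝ)
    (hf : DifferentiableAt ℝ f p) (hg : DifferentiableAt ℝ g p) :
    pd v (fun q => f q * g q) p = pd v f p * g p + f p * pd v g p := by
  unfold pd
  rw [fderiv_fun_mul hf hg]
  simp [smul_eq_mul]; ring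

lemma pd_add {f g : ℝ × ℝ → ℝ} {p : ℝ × ℝ} (v : ℝ × ℝ)
    (hf : DifferentiableAt ℝ f p) (hg : DifferentiableAt ℝ g p) :
    pd v (fun q => f q + g q) p = pd v f p + pd v g p := by
  unfold pd; rw [fderiv_fun_add hf hg]; rfl

lemma pd_pd {f : ℝ × ℝ → ℝ} {s : Set (ℝ × ℝ)} (hf : ContDiffOn ℝ (⊤ : ℕ∞) f s) (hs : IsOpen s)
    {p : ℝ × ℝ} (hp : p ∈ s) (v w : ℝ × ℝ) :
    pd w (pd v f) p = fderiv ℝ (fderiv ℝ f) p w v := by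
  have hd : DifferentiableAt ℝ (fderiv ℝ f) p :=
    ((hf.fderiv_of_isOpen (m := (⊤ : ℕ∞)) hs (by simp)).contDiffAt (hs.mem_nhds hp)).differentiableAt (by simp)
  have h : HasFDerivAt (pd v f)
      ((ContinuousLinearMap.apply ℝ ℝ v).comp (fderiv ℝ (fderiv ℝ f) p)) p :=
    (ContinuousLinearMap.apply ℝ ℝ v).hasFDerivAt.comp p hd.hasFDerivAt
  have := h.fderiv
  unfold pd
  rw [show (fun p => (fderiv ℝ f p) v) = pd v f from rfl, this]; rfl

lemma pd_symm {f : ℝ × ℝ → ℝ} {s : Set (ℝ × ℝ)} (hf : ContDiffOn ℝ (⊤ : ℕ∞) f s) (hs : IsOpen s)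
    {p : ℝ × ℝ} (hp : p ∈ s) (v w : ℝ × ℝ) :
    pd w (pd v f) p = pd v (pd w f) p := by
  rw [pd_pd hf hs hp, pd_pd hf hs hp]
  exact (hf.contDiffAt (hs.mem_nhds hp)).isSymmSndFDerivAt (by rw [minSmoothness_of_isRCLikeNormedField]; exact WithTop.coe_le_coe.mpr (le_top : (2 : ℕ∞) ≤ ⊤)) w v

/-- First derivative of the composition. -/
lemma pd_first {U Ω : Set (ℝ × ℝ)} {wbar u ubar : ℝ × ℝ → ℝ}
    (hU : IsOpen U) (hwbar : ContDiffOn ℝ (⊤ : ℕ∞) wbar U)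
    (hΩ : IsOpen Ω) (hu : ContDiffOn ℝ (⊤ : ℕ∞) u Ω) (hubar : ContDiffOn ℝ (⊤ : ℕ∞) ubar Ω)
    (hmap : ∀ p ∈ Ω, (ubar p, u p) ∈ U) {p : ℝ × ℝ} (hp : p ∈ Ω) (v : ℝ × ℝ) :
    pd v (fun q => wbar (ubar q, u q)) p
      = pd v ubar p * pd (1,0) wbar (ubar p, u p)
        + pd v u p * pd (0,1) wbar (ubar p, u p) :=
  pd_comp v (diffAt_of_contDiffOn hwbar hU (hmap p hp))
    (diffAt_of_contDiffOn hubar hΩ hp) (diffAt_of_contDiffOn hu hΩ hp)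

/-- Second derivative of the composition. -/
lemma pd_second {U Ω : Set (ℝ × ℝ)} {wbar u ubar : ℝ × ℝ → ℝ}
    (hU : IsOpen U) (hwbar : ContDiffOn ℝ (⊤ : ℕ∞) wbar U)
    (hΩ : IsOpen Ω) (hu : ContDiffOn ℝ (⊤ : ℕ∞) u Ω) (hubar : ContDiffOn ℝ (⊤ : ℕ∞) ubar Ω)
    (hmap : ∀ p ∈ Ω, (ubar p, u p) ∈ U) {p : ℝ × ℝ} (hp : p ∈ Ω) (v w : ℝ × ℝ) :
    pd w (pd v (fun q => wbar (ubar q, u q))) p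
      = pd w (pd v ubar) p * pd (1,0) wbar (ubar p, u p)
        + pd w (pd v u) p * pd (0,1) wbar (ubar p, u p)
        + pd v ubar p * (pd w ubar p * pd (1,0) (pd (1,0) wbar) (ubar p, u p)
            + pd w u p * pd (0,1) (pd (1,0) wbar) (ubar p, u p))
        + pd v u p * (pd w ubar p * pd (1,0) (pd (0,1) wbar) (ubar p, u p)
            + pd w u p * pd (0,1) (pd (0,1) wbar) (ubar p, u p)) := by
  have hub := diffAt_of_contDiffOn hubar hΩ hp
  have hud := diffAt_of_contDiffOn hu hΩ hp
  have hdub : DifferentiableAt ℝ (pd v ubar) p :=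
    diffAt_of_contDiffOn (pd_contDiffOn hubar hΩ v) hΩ hp
  have hdu : DifferentiableAt ℝ (pd v u) p :=
    diffAt_of_contDiffOn (pd_contDiffOn hu hΩ v) hΩ hp
  have hf1 : DifferentiableAt ℝ (fun q => pd (1,0) wbar (ubar q, u q)) p :=
    (diffAt_of_contDiffOn (pd_contDiffOn hwbar hU (1,0)) hU (hmap p hp)).comp p
      (f := fun q => (ubar q, u q)) (hub.prodMk hud)
  have hf2 : DifferentiableAt ℝ (fun q => pd (0,1) wbar (ubar q, u q)) p :=
    (diffAt_of_contDiffOn (pd_contDiffOn hwbar hU (0,1)) hU (hmap p hp)).comp p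
      (f := fun q => (ubar q, u q)) (hub.prodMk hud)
  have hev : pd v (fun q => wbar (ubar q, u q))
      =ᶠ[nhds p] fun q => pd v ubar q * pd (1,0) wbar (ubar q, u q)
        + pd v u q * pd (0,1) wbar (ubar q, u q) := by
    filter_upwards [hΩ.mem_nhds hp] with q hq
    exact pd_first hU hwbar hΩ hu hubar hmap hq v
  have hrw : pd w (pd v (fun q => wbar (ubar q, u q))) p
      = pd w (fun q => pd v ubar q * pd (1,0) wbar (ubar q, u q)
          + pd v u q * pd (0,1) wbar (ubar q, u q)) p :=
    congrArg (fun L : (ℝ × ℝ) →L[ℝ] ℝ => L w) hev.fderiv_eq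
  rw [hrw, pd_add w (hdub.fun_mul hf1) (hdu.fun_mul hf2), pd_mul w hdub hf1, pd_mul w hdu hf2,
    pd_comp w (diffAt_of_contDiffOn (pd_contDiffOn hwbar hU (1,0)) hU (hmap p hp)) hub hud,
    pd_comp w (diffAt_of_contDiffOn (pd_contDiffOn hwbar hU (0,1)) hU (hmap p hp)) hub hud]
  ring

end helpers

/-- Conformal invariance of the degenerate equation: if `wbar` solves
`y Δwbar + a ∂_y wbar = 0` on an open subset `U` of the upper half-plane, `u` is harmonic
and positive on a simply connected open `Ω`, `ubar` is a harmonic conjugate of `u`, and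
`Θ = (ubar, u)` maps `Ω` into `U`, then `w = wbar ∘ Θ` solves `u Δw + a ∇u·∇w = 0` on `Ω`. -/
theorem statement_5 (a : ℝ) (ha : -1 < a)
    (U : Set (ℝ × ℝ)) (hU : IsOpen U) (hUsub : U ⊆ {p : ℝ × ℝ | 0 < p.2})
    (wbar : ℝ × ℝ → ℝ) (hwbar : ContDiffOn ℝ (⊤ : ℕ∞) wbar U)
    (heqwbar : ∀ p ∈ U, p.2 * lap wbar p + a * py wbar p = 0)
    (Ω : Set (ℝ × ℝ)) (hΩ : IsOpen Ω) (hsc : SimplyConnectedSpace Ω)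
    (u ubar : ℝ × ℝ → ℝ)
    (hu : ContDiffOn ℝ (⊤ : ℕ∞) u Ω) (hubar : ContDiffOn ℝ (⊤ : ℕ∞) ubar Ω)
    (hharm : ∀ p ∈ Ω, lap u p = 0)
    (hCR : ∀ p ∈ Ω, px ubar p = -(py u p) ∧ py ubar p = px u p)
    (hupos : ∀ p ∈ Ω, 0 < u p)
    (hmap : ∀ p ∈ Ω, (ubar p, u p) ∈ U) :
    ∀ p ∈ Ω,
      u p * lap (fun q => wbar (ubar q, u q)) p
        + a * (px u p * px (fun q => wbar (ubar q, u q)) p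
             + py u p * py (fun q => wbar (ubar q, u q)) p) = 0 := by
  intro p hp
  have hCR1 : pd (1,0) ubar p = -(pd (0,1) u p) := (hCR p hp).1
  have hCR2 : pd (0,1) ubar p = pd (1,0) u p := (hCR p hp).2
  have hTu : pd (1,0) (pd (1,0) u) p + pd (0,1) (pd (0,1) u) p = 0 := hharm p hp
  have hSub : pd (1,0) (pd (1,0) ubar) p + pd (0,1) (pd (0,1) ubar) p = 0 := by
    have hev1 : pd (1,0) ubar =ᶠ[nhds p] fun q => -(pd (0,1) u q) := by
      filter_upwards [hΩ.mem_nhds hp] with q hq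
      exact (hCR q hq).1
    have hev2 : pd (0,1) ubar =ᶠ[nhds p] fun q => pd (1,0) u q := by
      filter_upwards [hΩ.mem_nhds hp] with q hq
      exact (hCR q hq).2
    have e1 : pd (1,0) (pd (1,0) ubar) p
        = fderiv ℝ (fun q => -(pd (0,1) u q)) p (1,0) :=
      congrArg (fun L : (ℝ × ℝ) →L[ℝ] ℝ => L (1,0)) hev1.fderiv_eq
    have e2 : pd (0,1) (pd (0,1) ubar) p
        = fderiv ℝ (fun q => pd (1,0) u q) p (0,1) :=
      congrArg (fun L : (ℝ × ℝ) →L[ℝ] ℝ => L (0,1)) hev2.fderiv_eq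
    have h1 : pd (1,0) (pd (1,0) ubar) p = -(pd (1,0) (pd (0,1) u) p) := by
      rw [e1, fderiv_fun_neg]
      simp [pd]
    have h2 : pd (0,1) (pd (0,1) ubar) p = pd (0,1) (pd (1,0) u) p := by
      rw [e2]; rfl
    rw [h1, h2, pd_symm hu hΩ hp (1,0) (0,1)]
    ring
  have hwb : u p * (pd (1,0) (pd (1,0) wbar) (ubar p, u p)
        + pd (0,1) (pd (0,1) wbar) (ubar p, u p))
      + a * pd (0,1) wbar (ubar p, u p) = 0 := by
    have h := heqwbar (ubar p, u p) (hmap p hp)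
    rw [lap_eq, py_eq] at h
    simpa using h
  have hx := pd_first hU hwbar hΩ hu hubar hmap hp (1,0)
  have hy := pd_first hU hwbar hΩ hu hubar hmap hp (0,1)
  have hxx := pd_second hU hwbar hΩ hu hubar hmap hp (1,0) (1,0)
  have hyy := pd_second hU hwbar hΩ hu hubar hmap hp (0,1) (0,1)
  simp only [lap_eq, px_eq, py_eq]
  rw [hxx, hyy, hx, hy, hCR1, hCR2]
  linear_combination (pd (1,0) u p ^ 2 + pd (0,1) u p ^ 2) * hwb
    + (u p * pd (1,0) wbar (ubar p, u p)) * hSub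
    + (u p * pd (0,1) wbar (ubar p, u p)) * hTu
end

section
/- Fix a > −1 with a ≠ 1 and n ≥ 2. Let P : ℝⁿ → ℝ be a polynomial that is symmetric with respect to the hyperplane {x_n = 0} (i.e. P(x', x_n) = P(x', −x_n)) and satisfies x_n ΔP + a ∂_n P = 0 on ℝⁿ. If P is not identically zero, then the degree of P equals the degree of its trace polynomial p(x') := P(x', 0). -/
open MvPolynomial


lemma aux_coeff_pderiv {σ : Type*} [DecidableEq σ] (i : σ) (f : MvPolynomial σ ℝ) (c : σ →₀ ℕ) :
    coeff c (pderiv i f) = ((c i + 1 : ℕ) : ℝ) * coeff (c + Finsupp.single i 1) f := by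
  induction f using MvPolynomial.induction_on' with
  | add p q hp hq => simp [hp, hq, mul_add]
  | monomial s r =>
    rw [pderiv_monomial]
    by_cases hs : s i = 0
    · have h1 : s ≠ c + Finsupp.single i 1 := by
        intro h
        have h2 : s i = c i + 1 := by rw [h]; simp
        omega
      rw [hs]
      rw [Nat.cast_zero, mul_zero, monomial_zero, coeff_zero, coeff_monomial, if_neg h1]
      ring
    · have key : c = s - Finsupp.single i 1 ↔ c + Finsupp.single i 1 = s := by
        constructor
        · rintro rfl
          ext j
          rcases eq_or_ne j i with rfl | hj
          · simp [Finsupp.single_apply]; omega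
          · simp [Finsupp.single_apply, hj.symm, Finsupp.tsub_apply]
        · rintro rfl
          ext j
          rcases eq_or_ne j i with rfl | hj
          · simp [Finsupp.single_apply, Finsupp.tsub_apply]
          · simp [Finsupp.single_apply, hj.symm, Finsupp.tsub_apply]
      rcases eq_or_ne c (s - Finsupp.single i 1) with rfl | hc
      · rw [coeff_monomial, if_pos rfl, coeff_monomial, if_pos (key.mp rfl).symm]
        have hci : (s - Finsupp.single i 1 : σ →₀ ℕ) i + 1 = s i := by
          have h2 := Finsupp.tsub_apply s (Finsupp.single i 1) i
          rw [h2, Finsupp.single_eq_same]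
          omega
        rw [hci]
        ring
      · rw [coeff_monomial, if_neg (fun h => hc h.symm), coeff_monomial,
          if_neg (fun h => hc (key.mpr h.symm))]
        ring

lemma aux_mem_support_pderiv {σ : Type*} [DecidableEq σ] (i : σ) (f : MvPolynomial σ ℝ)
    (c : σ →₀ ℕ) (h : c ∈ (pderiv i f).support) : c + Finsupp.single i 1 ∈ f.support := by
  rw [mem_support_iff] at h ⊢
  rw [aux_coeff_pderiv] at h
  exact fun h0 => h (by rw [h0, mul_zero])

lemma aux_cons_add_single_zero {m : ℕ} (j : ℕ) (d : Fin m →₀ ℕ) :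
    Finsupp.cons j d + Finsupp.single (0 : Fin (m + 1)) 1 = Finsupp.cons (j + 1) d := by
  ext a
  refine Fin.cases ?_ (fun k => ?_) a <;>
    simp [Finsupp.single_apply, (Fin.succ_ne_zero _).symm]

lemma aux_cons_add_single_succ {m : ℕ} (j : ℕ) (d : Fin m →₀ ℕ) (k : Fin m) :
    Finsupp.cons j d + Finsupp.single k.succ 1 = Finsupp.cons j (d + Finsupp.single k 1) := by
  ext a
  refine Fin.cases ?_ (fun l => ?_) a
  · simp [Finsupp.single_apply, Fin.succ_ne_zero]
  · simp [Finsupp.single_apply, Fin.succ_inj]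

lemma aux_sum_cons {m : ℕ} (j : ℕ) (d : Fin m →₀ ℕ) :
    (Finsupp.cons j d).sum (fun _ n => n) = j + d.sum (fun _ n => n) := by
  rw [Finsupp.sum_fintype _ _ (fun _ => rfl), Finsupp.sum_fintype _ _ (fun _ => rfl),
    Fin.sum_univ_succ]
  simp


lemma aux_phi_pderiv_zero {m : ℕ} (f : MvPolynomial (Fin (m + 1)) ℝ) :
    finSuccEquiv ℝ m (pderiv 0 f) = Polynomial.derivative (finSuccEquiv ℝ m f) := by
  refine Polynomial.ext fun j => MvPolynomial.ext _ _ fun d => ?_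
  rw [finSuccEquiv_coeff_coeff, Polynomial.coeff_derivative]
  rw [aux_coeff_pderiv]
  rw [show (Finsupp.cons j d : Fin (m+1) →₀ ℕ) 0 = j from Finsupp.cons_zero _ _]
  rw [aux_cons_add_single_zero]
  have hc : ((j : MvPolynomial (Fin m) ℝ) + 1) = C ((j + 1 : ℕ) : ℝ) := by
    push_cast
    simp [map_natCast]
  rw [hc, mul_comm (((MvPolynomial.finSuccEquiv ℝ m) f).coeff (j + 1)) (C _), coeff_C_mul,
    finSuccEquiv_coeff_coeff]

lemma aux_phi_pderiv_succ {m : ℕ} (k : Fin m) (f : MvPolynomial (Fin (m + 1)) ℝ) (j : ℕ) :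
    (finSuccEquiv ℝ m (pderiv k.succ f)).coeff j
      = pderiv k ((finSuccEquiv ℝ m f).coeff j) := by
  refine MvPolynomial.ext _ _ fun d => ?_
  rw [finSuccEquiv_coeff_coeff, aux_coeff_pderiv, aux_coeff_pderiv, finSuccEquiv_coeff_coeff,
    aux_cons_add_single_succ]
  rw [show (Finsupp.cons j d : Fin (m+1) →₀ ℕ) k.succ = d k from Finsupp.cons_succ _ _ _]

lemma aux_comp_neg_X_coeff {S : Type*} [CommRing S] (p : Polynomial S) (n : ℕ) :
    (p.comp (-Polynomial.X)).coeff n = (-1) ^ n * p.coeff n := by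
  induction p using Polynomial.induction_on' with
  | add p q hp hq => simp [Polynomial.add_comp, hp, hq, mul_add]
  | monomial k r =>
    rw [Polynomial.monomial_comp]
    rw [show (-Polynomial.X : Polynomial S) = Polynomial.C (-1) * Polynomial.X by simp]
    rw [mul_pow, ← Polynomial.C_pow, ← mul_assoc, ← Polynomial.C_mul,
      Polynomial.C_mul_X_pow_eq_monomial]
    rcases eq_or_ne k n with rfl | hk
    · simp [Polynomial.coeff_monomial, mul_comm]
    · simp [Polynomial.coeff_monomial, hk]


lemma aux_phi_aeval_neg {m : ℕ} (f : MvPolynomial (Fin (m + 1)) ℝ) :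
    finSuccEquiv ℝ m
        (aeval (fun i => Fin.cases (-X 0) (fun k : Fin m => X k.succ) i) f)
      = (finSuccEquiv ℝ m f).comp (-Polynomial.X) := by
  set A := MvPolynomial (Fin m) ℝ
  let F1 : MvPolynomial (Fin (m + 1)) ℝ →+* Polynomial A :=
    (Polynomial.eval₂RingHom Polynomial.C (-Polynomial.X)).comp
      ((finSuccEquiv ℝ m : MvPolynomial (Fin (m + 1)) ℝ ≃ₐ[ℝ] Polynomial A) :
        MvPolynomial (Fin (m + 1)) ℝ →+* Polynomial A)
  let F2 : MvPolynomial (Fin (m + 1)) ℝ →+* Polynomial A :=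
    ((finSuccEquiv ℝ m : MvPolynomial (Fin (m + 1)) ℝ ≃ₐ[ℝ] Polynomial A) :
        MvPolynomial (Fin (m + 1)) ℝ →+* Polynomial A).comp
      ((aeval (fun i => Fin.cases (-X 0) (fun k : Fin m => X k.succ) i)).toRingHom)
  have hC : ∀ r : ℝ, finSuccEquiv ℝ m (C r) = Polynomial.C (C r) := fun r => by
    simp [MvPolynomial.finSuccEquiv_apply]
  have key : F1 = F2 := by
    apply MvPolynomial.ringHom_ext
    · intro r
      simp only [F1, F2, RingHom.comp_apply, AlgHom.toRingHom_eq_coe, RingHom.coe_coe,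
        RingHom.coe_coe]
      simp [hC, aeval_C, MvPolynomial.algebraMap_eq]
    · intro i
      refine Fin.cases ?_ (fun k => ?_) i
      · simp only [F1, F2, RingHom.comp_apply]
        simp [finSuccEquiv_X_zero]
      · simp only [F1, F2, RingHom.comp_apply]
        simp [finSuccEquiv_X_succ]
  have := DFunLike.congr_fun key f
  simpa only [F1, F2, RingHom.comp_apply, Polynomial.coe_eval₂RingHom, AlgHom.toRingHom_eq_coe,
    RingHom.coe_coe, Polynomial.comp] using this.symm

/-- Trace polynomial lemma: for `a > −1`, `a ≠ 1`, a nonzero polynomial `P` on `ℝⁿ` (`n ≥ 2`),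
symmetric with respect to `{xₙ = 0}` and satisfying `xₙ ΔP + a ∂ₙP = 0`, has the same degree
as its trace `p(x') = P(x', 0)` on the hyperplane. -/
theorem statement_7 (a : ℝ) (ha : -1 < a) (ha1 : a ≠ 1) (m : ℕ) (hm : 1 ≤ m)
    (P : MvPolynomial (Fin (m + 1)) ℝ) (hP : P ≠ 0)
    (hsym : ∀ x : Fin (m + 1) → ℝ,
      eval (Function.update x (Fin.last m) (-(x (Fin.last m)))) P = eval x P)
    (heq : X (Fin.last m) * (∑ i, pderiv i (pderiv i P))
      + C a * pderiv (Fin.last m) P = 0) :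
    P.totalDegree
      = (aeval (fun i : Fin (m + 1) =>
          (Fin.lastCases 0 X i : MvPolynomial (Fin m) ℝ)) P).totalDegree := by
  classical
  set e := finRotate (m + 1) with he
  set R : MvPolynomial (Fin (m + 1)) ℝ := rename (⇑e) P with hR
  set Q := finSuccEquiv ℝ m R with hQdef
  have hren : ∀ (g : MvPolynomial (Fin (m + 1)) ℝ) (i : Fin (m + 1)),
      rename (⇑e) (pderiv i g) = pderiv (e i) (rename (⇑e) g) :=
    fun g i => (pderiv_rename e.injective i g).symm
  -- the renamed equation, with distinguished variable 0
  have heqR : X (0 : Fin (m + 1)) * (∑ i, pderiv i (pderiv i R))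
      + C a * pderiv 0 R = 0 := by
    have h0 := congrArg (rename (⇑e)) heq
    rw [map_add, map_mul, map_mul, rename_X, rename_C, map_zero, map_sum] at h0
    simp only [hren] at h0
    rw [finRotate_last] at h0
    rw [Equiv.sum_comp e (fun i => pderiv i (pderiv i R))] at h0
    exact h0
  have hC : ∀ r : ℝ, finSuccEquiv ℝ m (C r) = Polynomial.C (C r) := fun r => by
    simp [MvPolynomial.finSuccEquiv_apply]
  have hQeq : Polynomial.X * (finSuccEquiv ℝ m (∑ i, pderiv i (pderiv i R)))
      + Polynomial.C (C a) * Polynomial.derivative Q = 0 := by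
    have h1 := congrArg (finSuccEquiv ℝ m) heqR
    rw [map_add, map_mul, map_mul, finSuccEquiv_X_zero, hC, map_zero,
      aux_phi_pderiv_zero] at h1
    exact h1
  -- the recurrence for the coefficients
  have hrec : ∀ j : ℕ, Q.coeff (j + 2)
        * ((((j + 1 : ℕ) : MvPolynomial (Fin m) ℝ) + 1)
          * ((((j : ℕ) : MvPolynomial (Fin m) ℝ) + 1) + C a))
      = - ∑ k : Fin m, pderiv k (pderiv k (Q.coeff j)) := by
    intro j
    have h2 := congrArg (fun p : Polynomial (MvPolynomial (Fin m) ℝ) => p.coeff (j + 1)) hQeq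
    simp only [Polynomial.coeff_add, Polynomial.coeff_zero, Polynomial.coeff_X_mul,
      Polynomial.coeff_C_mul, map_sum, Polynomial.finset_sum_coeff] at h2
    rw [Fin.sum_univ_succ] at h2
    simp only [aux_phi_pderiv_zero, aux_phi_pderiv_succ, Polynomial.coeff_derivative] at h2
    simp only [show j + 1 + 1 = j + 2 from rfl] at h2
    linear_combination h2
  -- solve the recurrence
  have hsolve : ∀ j : ℕ, Q.coeff (j + 2)
      = C (-((((j : ℝ) + 2) * (((j : ℝ) + 1) + a))⁻¹))
        * ∑ k : Fin m, pderiv k (pderiv k (Q.coeff j)) := by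
    intro j
    have hfac : ((((j + 1 : ℕ) : MvPolynomial (Fin m) ℝ) + 1)
          * ((((j : ℕ) : MvPolynomial (Fin m) ℝ) + 1) + C a))
        = C ((((j : ℝ) + 2) * (((j : ℝ) + 1) + a))) := by
      have e1 : ((j + 1 : ℕ) : MvPolynomial (Fin m) ℝ) = C ((j + 1 : ℕ) : ℝ) :=
        (map_natCast (C : ℝ →+* MvPolynomial (Fin m) ℝ) (j + 1)).symm
      have e2 : ((j : ℕ) : MvPolynomial (Fin m) ℝ) = C ((j : ℕ) : ℝ) :=
        (map_natCast (C : ℝ →+* MvPolynomial (Fin m) ℝ) j).symm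
      rw [e1, e2, show (1 : MvPolynomial (Fin m) ℝ) = C (1 : ℝ) from (map_one C).symm,
        ← map_add, ← map_add, ← map_add, ← map_mul]
      congr 1
      push_cast
      ring
    have hr : 0 < (((j : ℝ) + 2) * (((j : ℝ) + 1) + a)) := by
      have h1 : (0 : ℝ) ≤ (j : ℝ) := Nat.cast_nonneg j
      nlinarith
    have h3 := hrec j
    rw [hfac] at h3
    calc Q.coeff (j + 2)
        = Q.coeff (j + 2) * C ((((j : ℝ) + 2) * (((j : ℝ) + 1) + a)))
          * C ((((j : ℝ) + 2) * (((j : ℝ) + 1) + a))⁻¹) := by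
          rw [mul_assoc, ← map_mul, mul_inv_cancel₀ hr.ne', map_one, mul_one]
      _ = - (∑ k : Fin m, pderiv k (pderiv k (Q.coeff j)))
          * C ((((j : ℝ) + 2) * (((j : ℝ) + 1) + a))⁻¹) := by rw [h3]
      _ = C (-((((j : ℝ) + 2) * (((j : ℝ) + 1) + a))⁻¹))
          * ∑ k : Fin m, pderiv k (pderiv k (Q.coeff j)) := by
          rw [map_neg]; ring
  -- symmetry: odd coefficients vanish
  have hsymR : ∀ x : Fin (m + 1) → ℝ,
      eval (Function.update x 0 (-(x 0))) R = eval x R := by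
    intro x
    rw [hR, eval_rename, eval_rename]
    have hfun : (Function.update x 0 (-(x 0))) ∘ ⇑e
        = Function.update (x ∘ ⇑e) (Fin.last m) (-((x ∘ ⇑e) (Fin.last m))) := by
      funext i
      refine Fin.lastCases ?_ (fun k => ?_) i
      · have h0 : e (Fin.last m) = 0 := by rw [he]; exact finRotate_last
        show Function.update x 0 (-(x 0)) (e (Fin.last m)) = _
        rw [h0]
        simp only [Function.update_self]
        rw [show (x ∘ ⇑e) (Fin.last m) = x (e (Fin.last m)) from rfl, h0]
      · have h1 : e (Fin.castSucc k) = k.succ := by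
          rw [he, finRotate_succ_apply, Fin.coeSucc_eq_succ]
        have h2 : Fin.castSucc k ≠ Fin.last m := (Fin.castSucc_lt_last k).ne
        show Function.update x 0 (-(x 0)) (e (Fin.castSucc k)) = _
        rw [h1]
        rw [Function.update_of_ne (Fin.succ_ne_zero k), Function.update_of_ne h2,
          Function.comp_apply, h1]
    rw [hfun]
    exact hsym (x ∘ ⇑e)
  have hsymQ : Q.comp (-Polynomial.X) = Q := by
    have hNR : aeval (fun i => Fin.cases (-X 0) (fun k : Fin m => X k.succ) i) R = R := by
      apply MvPolynomial.funext
      intro x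
      have hx1 : eval x (aeval (fun i => Fin.cases (-X 0) (fun k : Fin m => X k.succ) i) R)
          = eval (fun i => eval x ((Fin.cases (-X 0) (fun k : Fin m => X k.succ) i :
              MvPolynomial (Fin (m + 1)) ℝ))) R := by
        rw [aeval_def, MvPolynomial.algebraMap_eq, eval_eval₂]
        congr 1
        refine RingHom.ext fun r => ?_
        simp
      rw [hx1]
      have hx2 : (fun i => eval x ((Fin.cases (-X 0) (fun k : Fin m => X k.succ) i :
            MvPolynomial (Fin (m + 1)) ℝ)))
          = Function.update x 0 (-(x 0)) := by
        funext i
        refine Fin.cases ?_ (fun k => ?_) i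
        · simp
        · simp [Function.update_of_ne (Fin.succ_ne_zero k)]
      rw [hx2]
      exact hsymR x
    have h4 := aux_phi_aeval_neg (m := m) R
    rw [hNR] at h4
    rw [← hQdef] at h4
    exact h4.symm
  have hodd : ∀ j, Odd j → Q.coeff j = 0 := by
    intro j hj
    have h3 := congrArg (fun p : Polynomial (MvPolynomial (Fin m) ℝ) => p.coeff j) hsymQ
    simp only [aux_comp_neg_X_coeff] at h3
    rw [Odd.neg_one_pow hj] at h3
    have h5 : Q.coeff j + Q.coeff j = 0 := by linear_combination - h3
    exact add_self_eq_zero.mp h5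
  -- the key induction
  have heven : ∀ i : ℕ, ∀ c ∈ (Q.coeff (2 * i)).support,
      (c.sum fun _ n => n) + 2 * i ≤ (Q.coeff 0).totalDegree := by
    intro i
    induction i with
    | zero =>
      intro c hc
      simpa using le_totalDegree hc
    | succ i ih =>
      intro c hc
      rw [show 2 * (i + 1) = 2 * i + 2 from by ring, hsolve (2 * i),
        mem_support_iff, coeff_C_mul] at hc
      have hc2 : coeff c (∑ k : Fin m, pderiv k (pderiv k (Q.coeff (2 * i)))) ≠ 0 := by
        intro h0
        rw [h0, mul_zero] at hc
        exact hc rfl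
      rw [coeff_sum] at hc2
      obtain ⟨k, -, hk⟩ := Finset.exists_ne_zero_of_sum_ne_zero hc2
      have m1 := aux_mem_support_pderiv _ _ _ (aux_mem_support_pderiv _ _ _
        (mem_support_iff.mpr hk))
      have h6 := ih _ m1
      have hsum : ((c + Finsupp.single k 1 + Finsupp.single k 1).sum fun _ n => n)
          = (c.sum fun _ n => n) + 2 := by
        rw [Finsupp.sum_add_index' (fun _ => rfl) (fun _ _ _ => rfl),
          Finsupp.sum_add_index' (fun _ => rfl) (fun _ _ _ => rfl),
          Finsupp.sum_single_index rfl]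
      rw [hsum] at h6
      omega
  -- comparing degrees
  have hcons : ∀ (j : ℕ) (d : Fin m →₀ ℕ), coeff d (Q.coeff j) = coeff (Finsupp.cons j d) R :=
    fun j d => finSuccEquiv_coeff_coeff d R j
  have h1 : R.totalDegree ≤ (Q.coeff 0).totalDegree := by
    rw [totalDegree]
    apply Finset.sup_le
    intro c hc
    have hcc : coeff (Finsupp.tail c) (Q.coeff (c 0)) ≠ 0 := by
      rw [hcons, Finsupp.cons_tail]
      exact mem_support_iff.mp hc
    rcases Nat.even_or_odd (c 0) with ⟨i, hi⟩ | ho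
    · have hci : c 0 = 2 * i := by omega
      rw [hci] at hcc
      have h7 := heven i _ (mem_support_iff.mpr hcc)
      have hs := aux_sum_cons (c 0) (Finsupp.tail c)
      rw [Finsupp.cons_tail] at hs
      omega
    · exact absurd (hodd _ ho ▸ hcc) (by simp)
  have h2 : (Q.coeff 0).totalDegree ≤ R.totalDegree := by
    rw [totalDegree]
    apply Finset.sup_le
    intro d hd
    have hd2 : Finsupp.cons 0 d ∈ R.support := by
      rw [mem_support_iff, ← hcons]
      exact mem_support_iff.mp hd
    have hle := le_totalDegree hd2
    rw [aux_sum_cons] at hle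
    simpa using hle
  have h3 : R.totalDegree = P.totalDegree := by
    apply le_antisymm
    · exact totalDegree_rename_le _ _
    · have hP2 : P = rename (⇑e.symm) R := by
        rw [hR, rename_rename, Equiv.symm_comp_self, rename_id, AlgHom.id_apply]
      nth_rewrite 1 [hP2]
      exact totalDegree_rename_le _ _
  -- the trace polynomial equals the 0-th coefficient
  have htr : aeval (fun i : Fin (m + 1) =>
      (Fin.lastCases 0 X i : MvPolynomial (Fin m) ℝ)) P = Q.coeff 0 := by
    apply MvPolynomial.funext
    intro x
    have hx1 : eval x (aeval (fun i : Fin (m + 1) =>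
          (Fin.lastCases 0 X i : MvPolynomial (Fin m) ℝ)) P)
        = eval (fun i => eval x ((Fin.lastCases 0 X i : MvPolynomial (Fin m) ℝ))) P := by
      rw [aeval_def, MvPolynomial.algebraMap_eq, eval_eval₂]
      congr 1
      refine RingHom.ext fun r => ?_
      simp
    rw [hx1]
    have hx2 : (fun i => eval x ((Fin.lastCases 0 X i : MvPolynomial (Fin m) ℝ)))
        = (Fin.cons 0 x : Fin (m + 1) → ℝ) ∘ ⇑e := by
      funext i
      refine Fin.lastCases ?_ (fun k => ?_) i
      · have h0 : e (Fin.last m) = 0 := by rw [he]; exact finRotate_last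
        simp [h0]
      · have h8 : e (Fin.castSucc k) = k.succ := by
          rw [he, finRotate_succ_apply, Fin.coeSucc_eq_succ]
        simp [h8]
    rw [hx2, ← eval_rename, ← hR, eval_eq_eval_mv_eval',
      ← Polynomial.coeff_zero_eq_eval_zero, Polynomial.coeff_map, ← hQdef]
  rw [htr, ← h3]
  exact le_antisymm h1 h2
end

section
/- Fix a > −1 with a ≠ 1 and n ≥ 2. Let P : ℝⁿ → ℝ be a polynomial symmetric with respect to {x_n = 0} satisfying x_n ΔP + a ∂_n P = 0 on ℝⁿ. If P(x', 0) = 0 for all x' ∈ ℝⁿ⁻¹, then P is identically zero. -/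
open MvPolynomial

private lemma coeff_pderiv' {n : ℕ} (i : Fin n) (d : Fin n →₀ ℕ)
    (P : MvPolynomial (Fin n) ℝ) :
    coeff d (pderiv i P) = ((d i : ℝ) + 1) * coeff (d + Finsupp.single i 1) P := by
  induction P using MvPolynomial.induction_on' with
  | add p q hp hq =>
    rw [map_add, coeff_add, hp, hq, coeff_add]; ring
  | monomial s c =>
    rw [pderiv_monomial, coeff_monomial, coeff_monomial]
    by_cases h : Finsupp.single i 1 ≤ s
    · have hiff : s - Finsupp.single i 1 = d ↔ s = d + Finsupp.single i 1 :=
        tsub_eq_iff_eq_add_of_le h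
      by_cases hs : s = d + Finsupp.single i 1
      · have h1 : s - Finsupp.single i 1 = d := hiff.mpr hs
        have h2 : s i = d i + 1 := by
          rw [hs, Finsupp.add_apply, Finsupp.single_eq_same]
        rw [if_pos h1, if_pos hs, h2]
        push_cast; ring
      · rw [if_neg (fun hc => hs (hiff.mp hc)), if_neg hs, mul_zero]
    · have hsi : s i = 0 := by
        by_contra hc
        exact h (Finsupp.single_le_iff.mpr (Nat.one_le_iff_ne_zero.mpr hc))
      have hs : s ≠ d + Finsupp.single i 1 := by
        intro hc
        rw [hc, Finsupp.add_apply, Finsupp.single_eq_same] at hsi; omega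
      rw [if_neg hs, mul_zero]
      split <;> simp [hsi]


/-- A polynomial on `ℝⁿ` (`n ≥ 2`), symmetric with respect to `{xₙ = 0}`, satisfying
`xₙ ΔP + a ∂ₙP = 0` with `a > −1`, `a ≠ 1`, and vanishing on `{xₙ = 0}`, is identically zero. -/
theorem statement_8 (a : ℝ) (ha : -1 < a) (ha1 : a ≠ 1) (m : ℕ) (hm : 1 ≤ m)
    (P : MvPolynomial (Fin (m + 1)) ℝ)
    (hsym : ∀ x : Fin (m + 1) → ℝ,
      eval (Function.update x (Fin.last m) (-(x (Fin.last m)))) P = eval x P)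
    (heq : X (Fin.last m) * (∑ i, pderiv i (pderiv i P))
      + C a * pderiv (Fin.last m) P = 0)
    (htrace : ∀ x : Fin (m + 1) → ℝ, x (Fin.last m) = 0 → eval x P = 0) :
    P = 0 := by
  classical
  set l := Fin.last m with hl
  -- the "negate last variable" algebra endomorphism
  set N : MvPolynomial (Fin (m+1)) ℝ →ₐ[ℝ] MvPolynomial (Fin (m+1)) ℝ :=
    aeval (fun i => if i = l then -X i else X i) with hN
  -- the "set last variable to zero" algebra endomorphism
  set T : MvPolynomial (Fin (m+1)) ℝ →ₐ[ℝ] MvPolynomial (Fin (m+1)) ℝ :=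
    aeval (fun i => if i = l then 0 else X i) with hT
  -- evaluation of N
  have hNeval : ∀ (x : Fin (m+1) → ℝ) (Q : MvPolynomial (Fin (m+1)) ℝ),
      eval x (N Q) = eval (Function.update x l (-(x l))) Q := by
    intro x Q
    have : (eval x).comp (N : MvPolynomial (Fin (m+1)) ℝ →+* MvPolynomial (Fin (m+1)) ℝ)
        = eval (Function.update x l (-(x l))) := by
      apply MvPolynomial.ringHom_ext
      · intro r; simp [hN]
      · intro i
        by_cases hi : i = l <;>
          simp [hN, hi, Function.update_apply]
    exact RingHom.congr_fun this Q
  have hTeval : ∀ (x : Fin (m+1) → ℝ) (Q : MvPolynomial (Fin (m+1)) ℝ),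
      eval x (T Q) = eval (Function.update x l 0) Q := by
    intro x Q
    have : (eval x).comp (T : MvPolynomial (Fin (m+1)) ℝ →+* MvPolynomial (Fin (m+1)) ℝ)
        = eval (Function.update x l 0) := by
      apply MvPolynomial.ringHom_ext
      · intro r; simp [hT]
      · intro i
        by_cases hi : i = l <;>
          simp [hT, hi, Function.update_apply]
    exact RingHom.congr_fun this Q
  have hNP : N P = P := by
    apply MvPolynomial.funext
    intro x
    rw [hNeval x P, hsym x]
  have hTP : T P = 0 := by
    apply MvPolynomial.funext
    intro x
    rw [hTeval x P, map_zero]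
    exact htrace _ (by simp)
  -- coefficient description of N
  have hNcoeff : ∀ (Q : MvPolynomial (Fin (m+1)) ℝ) (d : Fin (m+1) →₀ ℕ),
      coeff d (N Q) = (-1 : ℝ) ^ (d l) * coeff d Q := by
    intro Q
    induction Q using MvPolynomial.induction_on' with
    | add p q hp hq =>
      intro d; rw [map_add, coeff_add, hp, hq, coeff_add]; ring
    | monomial s c =>
      intro d
      have hmon : N (monomial s c) = monomial s ((-1 : ℝ) ^ (s l) * c) := by
        rw [hN, aeval_monomial, ← C_mul_monomial, monomial_eq]
        have hprod : (s.prod fun j k => (if j = l then -X j else X j) ^ k)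
            = C ((-1 : ℝ) ^ (s l)) * s.prod fun j k => (X j : MvPolynomial (Fin (m+1)) ℝ) ^ k := by
          rw [Finsupp.prod, Finsupp.prod]
          have : ∀ j ∈ s.support, ((if j = l then -X j else X j) ^ s j : MvPolynomial (Fin (m+1)) ℝ)
              = (if j = l then C ((-1:ℝ)) ^ s j else 1) * X j ^ s j := by
            intro j _
            by_cases hj : j = l
            · rw [if_pos hj, if_pos hj]
              rw [show (-X j : MvPolynomial (Fin (m+1)) ℝ) = C (-1) * X j by
                rw [map_neg, map_one]; ring]
              rw [mul_pow]
            · rw [if_neg hj, if_neg hj, one_mul]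
          rw [Finset.prod_congr rfl this, Finset.prod_mul_distrib]
          congr 1
          rw [Finset.prod_ite_eq' s.support l (fun j => C ((-1:ℝ)) ^ s j)]
          by_cases hls : l ∈ s.support
          · simp [hls, ← C_pow]
          · have : s l = 0 := Finsupp.notMem_support_iff.mp hls
            simp [hls, this]
        rw [hprod, algebraMap_eq, ← mul_assoc, mul_comm (C c) _, mul_assoc, ← monomial_eq,
          C_mul_monomial]
      rw [hmon, coeff_monomial, coeff_monomial]
      by_cases hs : s = d
      · subst hs; simp
      · simp [hs]
  -- coefficient description of T
  have hTcoeff : ∀ (Q : MvPolynomial (Fin (m+1)) ℝ) (d : Fin (m+1) →₀ ℕ), d l = 0 →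
      coeff d (T Q) = coeff d Q := by
    intro Q
    induction Q using MvPolynomial.induction_on' with
    | add p q hp hq =>
      intro d hd; rw [map_add, coeff_add, hp _ hd, hq _ hd, coeff_add]
    | monomial s c =>
      intro d hd
      by_cases hsl : s l = 0
      · have hmon : T (monomial s c) = monomial s c := by
          rw [hT, aeval_monomial, monomial_eq, algebraMap_eq]
          congr 1
          rw [Finsupp.prod, Finsupp.prod]
          apply Finset.prod_congr rfl
          intro j hj
          have : j ≠ l := fun hc => (Finsupp.mem_support_iff.mp hj) (hc ▸ hsl)
          simp [this]
        rw [hmon]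
      · have hmon : T (monomial s c) = 0 := by
          rw [hT, aeval_monomial, Finsupp.prod]
          have hls : l ∈ s.support := Finsupp.mem_support_iff.mpr hsl
          rw [Finset.prod_eq_zero hls (by simp [zero_pow hsl])]
          rw [mul_zero]
        rw [hmon, coeff_zero, coeff_monomial,
          if_neg (fun hc : s = d => hsl (hc ▸ hd))]
  -- coefficients with zero last exponent vanish
  have h0 : ∀ d : Fin (m+1) →₀ ℕ, d l = 0 → coeff d P = 0 := by
    intro d hd
    rw [← hTcoeff P d hd, hTP, coeff_zero]
  -- coefficients with odd last exponent vanish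
  have hodd : ∀ d : Fin (m+1) →₀ ℕ, Odd (d l) → coeff d P = 0 := by
    intro d hd
    have h1 := hNcoeff P d
    rw [hNP, Odd.neg_one_pow hd] at h1
    linarith
  suffices h : ∀ k, ∀ d : Fin (m+1) →₀ ℕ, d l = k → coeff d P = 0 by
    ext d
    rw [coeff_zero]
    exact h _ d rfl
  intro k
  induction k using Nat.strong_induction_on with
  | _ k IH =>
  intro d hd
  rcases k with _ | _ | j
  · exact h0 d hd
  · exact hodd d (by rw [hd]; exact odd_one)
  · -- main recursion: apply coeff (d2 + e) to heq where d = d2 + e + e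
    have hle : Finsupp.single l 1 + Finsupp.single l 1 ≤ d := by
      rw [← Finsupp.single_add]
      exact Finsupp.single_le_iff.mpr (by omega)
    obtain ⟨d2, rfl⟩ : ∃ d2, d = d2 + Finsupp.single l 1 + Finsupp.single l 1 := by
      refine ⟨d - (Finsupp.single l 1 + Finsupp.single l 1), ?_⟩
      rw [add_assoc]
      exact (tsub_add_cancel_of_le hle).symm
    have hd2l : d2 l = j := by
      rw [Finsupp.add_apply, Finsupp.add_apply, Finsupp.single_eq_same] at hd
      omega
    have hco := congrArg (coeff (d2 + Finsupp.single l 1)) heq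
    rw [coeff_add, coeff_zero, coeff_C_mul, coeff_pderiv'] at hco
    have hA : coeff (d2 + Finsupp.single l 1)
        (X l * ∑ i, pderiv i (pderiv i P))
        = coeff d2 (∑ i, pderiv i (pderiv i P)) := by
      rw [show d2 + Finsupp.single l 1 = Finsupp.single l 1 + d2 from add_comm _ _,
        coeff_X_mul]
    rw [hA] at hco
    have hB : (((d2 + Finsupp.single l 1 : Fin (m+1) →₀ ℕ)) l : ℝ) = (j : ℝ) + 1 := by
      rw [Finsupp.add_apply, Finsupp.single_eq_same, hd2l]
      push_cast; ring
    rw [hB] at hco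
    -- compute the Laplacian coefficient
    have hsum : coeff d2 (∑ i, pderiv i (pderiv i P))
        = ((j : ℝ) + 1) * ((j : ℝ) + 2)
          * coeff (d2 + Finsupp.single l 1 + Finsupp.single l 1) P := by
      rw [coeff_sum]
      rw [Finset.sum_eq_single l]
      · rw [coeff_pderiv', coeff_pderiv']
        have h1 := hB
        rw [h1, hd2l]
        ring
      · intro i _ hil
        rw [coeff_pderiv', coeff_pderiv']
        have hthis : ((d2 + Finsupp.single i 1 + Finsupp.single i 1 : Fin (m+1) →₀ ℕ)) l = j := by
          rw [Finsupp.add_apply, Finsupp.add_apply, Finsupp.single_eq_of_ne' hil, hd2l]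
          omega
        rw [IH j (by omega) _ hthis, mul_zero, mul_zero]
      · intro h; exact absurd (Finset.mem_univ l) h
    rw [hsum] at hco
    set c := coeff (d2 + Finsupp.single l 1 + Finsupp.single l 1) P with hc
    have hkey : ((j:ℝ) + 2) * (((j:ℝ) + 1) + a) * c = 0 := by
      nlinarith [hco]
    have hne : ((j:ℝ) + 2) * (((j:ℝ) + 1) + a) ≠ 0 := by
      have hj0 : (0:ℝ) ≤ (j:ℝ) := Nat.cast_nonneg j
      have : (0:ℝ) < ((j:ℝ) + 2) * (((j:ℝ) + 1) + a) := by nlinarith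
      exact ne_of_gt this
    exact (mul_eq_zero.mp hkey).resolve_left hne
end

section
/- Let d ≥ 2 and let P be a nonzero homogeneous harmonic polynomial of degree d on ℝ². Then there is no vector ξ ∈ ℝ² \ {0} such that ∇P(x) = |∇P(x)|·ξ for every x in the regular part of the nodal set R(P) = {x : P(x) = 0, ∇P(x) ≠ 0}. -/
open MvPolynomial Complex

namespace Aux12

noncomputable def mono (k l : ℕ) : Fin 2 →₀ ℕ := Finsupp.single 0 k + Finsupp.single 1 l

lemma mono_apply0 (k l : ℕ) : mono k l 0 = k := by simp [mono, Finsupp.single_apply]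
lemma mono_apply1 (k l : ℕ) : mono k l 1 = l := by simp [mono, Finsupp.single_apply]

lemma degree_fin2 (m : Fin 2 →₀ ℕ) : m.degree = m 0 + m 1 := by
  rw [Finsupp.degree, ← Fin.sum_univ_two (fun i => m i)]
  exact Finset.sum_subset (Finset.subset_univ _)
    (fun i _ hi => Finsupp.notMem_support_iff.mp hi)

lemma eq_mono (m : Fin 2 →₀ ℕ) : m = mono (m 0) (m 1) := by
  ext i; fin_cases i <;> simp [mono, Finsupp.single_apply]

lemma mono_add0 (k l : ℕ) : mono k l + Finsupp.single 0 1 = mono (k+1) l := by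
  ext i; fin_cases i <;> simp [mono, Finsupp.single_apply]

lemma mono_add1 (k l : ℕ) : mono k l + Finsupp.single 1 1 = mono k (l+1) := by
  ext i; fin_cases i <;> simp [mono, Finsupp.single_apply]

lemma coeff_pderiv (i : Fin 2) (Q : MvPolynomial (Fin 2) ℝ) (m : Fin 2 →₀ ℕ) :
    coeff m (pderiv i Q) = ((m i : ℝ) + 1) * coeff (m + Finsupp.single i 1) Q := by
  induction Q using MvPolynomial.induction_on' with
  | add p q hp hq => rw [map_add, coeff_add, coeff_add, hp, hq, mul_add]
  | monomial s a =>
    rw [pderiv_monomial, coeff_monomial, coeff_monomial]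
    by_cases hs : s = m + Finsupp.single i 1
    · subst hs
      rw [if_pos rfl, if_pos (by rw [add_tsub_cancel_right])]
      rw [Finsupp.add_apply, Finsupp.single_eq_same]; push_cast; ring
    · rw [if_neg hs, mul_zero]
      by_cases h0 : s i = 0
      · split_ifs <;> simp [h0]
      · rw [if_neg]
        intro hEq
        apply hs
        rw [← hEq, tsub_add_cancel_of_le]
        rwa [Finsupp.single_le_iff, Nat.one_le_iff_ne_zero]


lemma pderiv_comm' (i j : Fin 2) (Q : MvPolynomial (Fin 2) ℝ) :
    pderiv i (pderiv j Q) = pderiv j (pderiv i Q) := by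
  apply MvPolynomial.ext; intro m
  rw [coeff_pderiv, coeff_pderiv, coeff_pderiv, coeff_pderiv, add_right_comm]
  by_cases h : i = j
  · subst h; ring
  · rw [Finsupp.add_apply, Finsupp.add_apply,
      Finsupp.single_apply, Finsupp.single_apply, if_neg h, if_neg (Ne.symm h)]
    push_cast; ring

lemma isHom_pderiv (n : ℕ) (P : MvPolynomial (Fin 2) ℝ) (h : P.IsHomogeneous (n+1))
    (i : Fin 2) : (pderiv i P).IsHomogeneous n := by
  intro m hm
  rw [coeff_pderiv] at hm
  have h2 : coeff (m + Finsupp.single i 1) P ≠ 0 := fun h0 => hm (by rw [h0, mul_zero])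
  have h3 := h h2
  rw [Pi.one_def, ← Finsupp.degree_eq_weight_one, degree_fin2] at h3 ⊢
  fin_cases i <;>
    simp only [Finsupp.add_apply, Finsupp.single_apply] at h3 <;>
    simp at h3 <;> omega

lemma chooseId (n k j : ℕ) (h : k + j + 2 = n) :
    (k+1)*(k+2)*n.choose (k+2) = (j+1)*(j+2)*n.choose k := by
  have e1 := Nat.choose_mul_factorial_mul_factorial (show k + 2 ≤ n by omega)
  have e2 := Nat.choose_mul_factorial_mul_factorial (show k ≤ n by omega)
  rw [show n - (k+2) = j by omega] at e1
  rw [show n - k = j + 2 by omega] at e2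
  have e3 := e1.trans e2.symm
  apply Nat.eq_of_mul_eq_mul_right (Nat.mul_pos k.factorial_pos j.factorial_pos)
  have f1 : (k+2).factorial = (k+2)*((k+1)*k.factorial) := by
    rw [Nat.factorial_succ, Nat.factorial_succ]
  have f2 : (j+2).factorial = (j+2)*((j+1)*j.factorial) := by
    rw [Nat.factorial_succ, Nat.factorial_succ]
  calc (k+1)*(k+2)*n.choose (k+2) * (k.factorial * j.factorial)
      = n.choose (k+2) * ((k+2)*((k+1)*k.factorial)) * j.factorial := by ring
    _ = n.choose (k+2) * (k+2).factorial * j.factorial := by rw [f1]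
    _ = n.choose k * k.factorial * (j+2).factorial := e3
    _ = n.choose k * k.factorial * ((j+2)*((j+1)*j.factorial)) := by rw [f2]
    _ = (j+1)*(j+2)*n.choose k * (k.factorial * j.factorial) := by ring

section Rep
variable (n : ℕ) (P : MvPolynomial (Fin 2) ℝ)

lemma recur (hharm : pderiv 0 (pderiv 0 P) + pderiv 1 (pderiv 1 P) = 0)
    (k j : ℕ) :
    ((k:ℝ)+1)*((k:ℝ)+2) * coeff (mono (k+2) j) P
      + ((j:ℝ)+1)*((j:ℝ)+2) * coeff (mono k (j+2)) P = 0 := by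
  have h0 := congrArg (coeff (mono k j)) hharm
  rw [coeff_add, coeff_zero, coeff_pderiv, coeff_pderiv, coeff_pderiv, coeff_pderiv,
    mono_add0, mono_add0, mono_add1, mono_add1, mono_apply0, mono_apply1,
    mono_apply0, mono_apply1] at h0
  push_cast at h0 ⊢
  linear_combination h0

lemma sum_rep (hhom : P.IsHomogeneous n) :
    P = ∑ k ∈ Finset.range (n+1), monomial (mono k (n-k)) (coeff (mono k (n-k)) P) := by
  apply MvPolynomial.ext; intro m
  rw [MvPolynomial.coeff_sum]
  simp only [coeff_monomial]
  by_cases hm : m.degree = n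
  · have hd := degree_fin2 m
    rw [Finset.sum_eq_single (m 0)]
    · rw [show n - m 0 = m 1 by omega, if_pos (eq_mono m).symm]
      exact congrArg (fun s => coeff s P) (eq_mono m)
    · intro k hk hne
      rw [if_neg]
      intro hEq
      exact hne (by simpa [mono_apply0] using congrArg (fun f : Fin 2 →₀ ℕ => f 0) hEq)
    · intro hmem
      exact absurd (Finset.mem_range.mpr (by omega)) hmem
  · rw [hhom.coeff_eq_zero hm, Finset.sum_eq_zero]
    intro k hk
    rw [if_neg]
    intro hEq
    apply hm
    rw [← hEq, degree_fin2, mono_apply0, mono_apply1]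
    have := Finset.mem_range.mp hk
    omega

lemma coeff_closed (hn : 1 ≤ n) (hhom : P.IsHomogeneous n)
    (hharm : pderiv 0 (pderiv 0 P) + pderiv 1 (pderiv 1 P) = 0) :
    ∀ k, k ≤ n → coeff (mono k (n-k)) P = (n.choose k : ℝ) *
      ((((coeff (mono n 0) P : ℝ) : ℂ) - ((coeff (mono (n-1) 1) P / n : ℝ) : ℂ) * Complex.I)
        * Complex.I ^ (n-k)).re := by
  set A := coeff (mono n 0) P with hA
  set B := coeff (mono (n-1) 1) P with hB
  set c : ℂ := (A : ℂ) - ((B / n : ℝ) : ℂ) * Complex.I with hc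
  have hcre : c.re = A := by simp [hc]
  have hcim : c.im = -(B/n) := by simp [hc]
  suffices h : ∀ j, ∀ k, k + j = n → coeff (mono k (n-k)) P = (n.choose k : ℝ) * (c * Complex.I ^ (n-k)).re by
    intro k hk; exact h (n-k) k (by omega)
  intro j
  induction j using Nat.strong_induction_on with
  | _ j ih =>
    match j with
    | 0 =>
      intro k hk
      have : k = n := by omega
      subst this
      simp [Nat.sub_self, hcre, hA]
    | 1 =>
      intro k hk
      have h1 : n - k = 1 := by omega
      have h2 : k = n - 1 := by omega
      rw [h1]
      have : (c * Complex.I).re = B / n := by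
        simp [hc]
      rw [pow_one, this, h2, Nat.choose_symm (by omega), Nat.choose_one_right, ← hB]
      field_simp
    | (j'+2) =>
      intro k hk
      have hrec := recur P hharm k j'
      have hIH := ih j' (by omega) (k+2) (by omega)
      rw [show n - (k+2) = j' by omega] at hIH
      rw [show n - k = j' + 2 by omega]
      have hkey : (((k:ℝ)+1)*((k:ℝ)+2)*(n.choose (k+2) : ℝ)) = ((j':ℝ)+1)*((j':ℝ)+2)*(n.choose k : ℝ) := by
        exact_mod_cast congrArg (fun t : ℕ => (t : ℝ)) (chooseId n k j' (by omega))
      have hI : (Complex.I : ℂ)^(j'+2) = -Complex.I^j' := by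
        rw [pow_add, Complex.I_sq]; ring
      have hre : (c * Complex.I^(j'+2)).re = -(c * Complex.I^j').re := by
        rw [hI]
        simp [mul_neg]
      rw [hre]
      rw [hIH] at hrec
      have hp : ((j':ℝ)+1)*((j':ℝ)+2) ≠ 0 := by positivity
      apply mul_left_cancel₀ hp
      linear_combination hrec - (c * Complex.I^j').re * hkey


lemma rep (hn : 1 ≤ n) (hhom : P.IsHomogeneous n)
    (hharm : pderiv 0 (pderiv 0 P) + pderiv 1 (pderiv 1 P) = 0) (x : Fin 2 → ℝ) :
    eval x P = ((((coeff (mono n 0) P : ℝ) : ℂ)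
        - ((coeff (mono (n-1) 1) P / n : ℝ) : ℂ) * Complex.I)
      * ((x 0 : ℂ) + (x 1 : ℂ) * Complex.I) ^ n).re := by
  set c : ℂ := ((coeff (mono n 0) P : ℝ) : ℂ)
      - ((coeff (mono (n-1) 1) P / n : ℝ) : ℂ) * Complex.I with hc
  have heval : eval x P
      = ∑ k ∈ Finset.range (n+1), coeff (mono k (n-k)) P * (x 0 ^ k * x 1 ^ (n-k)) := by
    conv_lhs => rw [sum_rep n P hhom]
    rw [map_sum]
    refine Finset.sum_congr rfl fun k hk => ?_
    rw [eval_monomial]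
    congr 1
    rw [Finsupp.prod_fintype _ _ (fun i => pow_zero _)]
    rw [Fin.prod_univ_two, mono_apply0, mono_apply1]
  rw [heval]
  have hbin : c * ((x 0 : ℂ) + (x 1 : ℂ) * Complex.I) ^ n
      = ∑ k ∈ Finset.range (n+1),
        c * ((x 0 : ℂ) ^ k * ((x 1 : ℂ) * Complex.I) ^ (n-k) * (n.choose k : ℂ)) := by
    rw [add_pow, Finset.mul_sum]
  rw [hbin, Complex.re_sum]
  refine Finset.sum_congr rfl fun k hk => ?_
  have hkn : k ≤ n := by have := Finset.mem_range.mp hk; omega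
  rw [coeff_closed n P hn hhom hharm k hkn, ← hc, mul_pow]
  have key : c * ((x 0 : ℂ)^k * ((x 1 : ℂ)^(n-k) * Complex.I^(n-k)) * ((n.choose k : ℕ) : ℂ))
      = (((x 0 ^ k * x 1 ^ (n-k) * (n.choose k : ℝ)) : ℝ) : ℂ) * (c * Complex.I^(n-k)) := by
    push_cast; ring
  rw [key, Complex.re_ofReal_mul]
  ring

lemma zero_of (hn : 1 ≤ n) (hhom : P.IsHomogeneous n)
    (hharm : pderiv 0 (pderiv 0 P) + pderiv 1 (pderiv 1 P) = 0)
    (hA : coeff (mono n 0) P = 0) (hB : coeff (mono (n-1) 1) P = 0) : P = 0 := by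
  apply MvPolynomial.ext; intro m
  rw [coeff_zero]
  by_cases hm : m.degree = n
  · have hd := degree_fin2 m
    have h1 : m = mono (m 0) (n - m 0) := by
      rw [show n - m 0 = m 1 by omega]; exact eq_mono m
    rw [h1, coeff_closed n P hn hhom hharm (m 0) (by omega), hA, hB]
    simp
  · exact hhom.coeff_eq_zero hm

end Rep
end Aux12

lemma Aux12.final_contra (e : ℕ) (m : ℤ) (hpi : 0 < Real.pi)
    (h2 : ((e:ℝ)+1)*Real.pi + (m:ℝ)*(2*Real.pi)*((e:ℝ)+2) = 0) : False := by
  have hE : (0:ℝ) ≤ (e:ℝ) := Nat.cast_nonneg e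
  rcases le_or_gt 0 m with h | h
  · have h' : (0:ℝ) ≤ (m:ℝ) := by exact_mod_cast h
    nlinarith [mul_nonneg (mul_nonneg h' (by positivity : (0:ℝ) ≤ 2*Real.pi))
      (by positivity : (0:ℝ) ≤ (e:ℝ)+2)]
  · have h' : (m:ℝ) ≤ -1 := by
      have hm1 : m ≤ -1 := by omega
      exact_mod_cast hm1
    have k1 : (m:ℝ)*(2*Real.pi) ≤ (-1)*(2*Real.pi) :=
      mul_le_mul_of_nonneg_right h' (by positivity)
    have k2 : (m:ℝ)*(2*Real.pi)*((e:ℝ)+2) ≤ (-1)*(2*Real.pi)*((e:ℝ)+2) :=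
      mul_le_mul_of_nonneg_right k1 (by positivity)
    nlinarith [mul_nonneg hE hpi.le]

open Aux12 in
/-- A nonzero homogeneous harmonic polynomial of degree `d ≥ 2` on `ℝ²` cannot have all its
nodal gradient directions equal to a single fixed vector: there is no `ξ ≠ 0` with
`∇P(x) = |∇P(x)|·ξ` for every `x` in the regular part of the nodal set of `P`. -/
theorem statement_12 (d : ℕ) (hd : 2 ≤ d) (P : MvPolynomial (Fin 2) ℝ) (hP : P ≠ 0)
    (hhom : P.IsHomogeneous d)
    (hharm : pderiv 0 (pderiv 0 P) + pderiv 1 (pderiv 1 P) = 0) :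
    ¬ ∃ ξ : Fin 2 → ℝ, ξ ≠ 0 ∧ ∀ x : Fin 2 → ℝ,
      eval x P = 0 →
      (eval x (pderiv 0 P) ≠ 0 ∨ eval x (pderiv 1 P) ≠ 0) →
      ∀ i : Fin 2, eval x (pderiv i P)
        = Real.sqrt ((eval x (pderiv 0 P)) ^ 2 + (eval x (pderiv 1 P)) ^ 2) * ξ i := by
  rintro ⟨ξ, hξ, hx⟩
  obtain ⟨e, rfl⟩ : ∃ e, d = e + 2 := ⟨d - 2, by omega⟩
  have hπ := Real.pi_pos
  have he2R : ((e:ℝ)+2) ≠ 0 := by positivity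
  have he2C : ((e:ℂ)+2) ≠ 0 := by
    intro h
    have h' := congrArg Complex.re h
    push_cast at h'
    have : (0:ℝ) ≤ (e:ℝ) := Nat.cast_nonneg e
    simp at h'
    linarith
  -- constants
  set A : ℝ := coeff (mono (e+2) 0) P with hA
  set B : ℝ := coeff (mono (e+1) 1) P with hB
  set c : ℂ := ((A : ℝ) : ℂ) - ((B / ((e+2 : ℕ) : ℝ) : ℝ) : ℂ) * Complex.I with hc
  -- representation of P
  have hrepP : ∀ x : Fin 2 → ℝ,
      eval x P = (c * ((x 0 : ℂ) + (x 1 : ℂ) * Complex.I) ^ (e+2)).re := by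
    intro x
    have h := rep (e+2) P (by omega) hhom hharm x
    rwa [show e+2-1 = e+1 from rfl] at h
  -- harmonicity and homogeneity of the partial derivatives
  have hhom1 : (pderiv 0 P).IsHomogeneous (e+1) := isHom_pderiv (e+1) P hhom 0
  have hhom2 : (pderiv 1 P).IsHomogeneous (e+1) := isHom_pderiv (e+1) P hhom 1
  have hharm1 : pderiv 0 (pderiv 0 (pderiv 0 P)) + pderiv 1 (pderiv 1 (pderiv 0 P)) = 0 := by
    have h := congrArg (pderiv 0) hharm
    rw [map_add, map_zero] at h
    rw [pderiv_comm' 1 0 P, pderiv_comm' 1 0 (pderiv 1 P)]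
    exact h
  have hharm2 : pderiv 0 (pderiv 0 (pderiv 1 P)) + pderiv 1 (pderiv 1 (pderiv 1 P)) = 0 := by
    have h := congrArg (pderiv 1) hharm
    rw [map_add, map_zero] at h
    rw [pderiv_comm' 0 1 P, pderiv_comm' 0 1 (pderiv 0 P)]
    exact h
  -- coefficients of the partial derivatives
  have hc10 : coeff (mono (e+1) 0) (pderiv 0 P) = (((e:ℝ))+2) * A := by
    rw [coeff_pderiv, mono_add0, mono_apply0, ← hA]; push_cast; ring
  have hc11 : coeff (mono e 1) (pderiv 0 P) = (((e:ℝ))+1) * B := by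
    rw [coeff_pderiv, mono_add0, mono_apply0, ← hB]; try push_cast; try ring
  have hc20 : coeff (mono (e+1) 0) (pderiv 1 P) = B := by
    rw [coeff_pderiv, mono_add1, mono_apply1, ← hB]; norm_num
  have hrec := recur P hharm e 0
  rw [← hA] at hrec
  have hc21 : coeff (mono e 1) (pderiv 1 P) = -(((e:ℝ))+1) * (((e:ℝ))+2) * A := by
    rw [coeff_pderiv, mono_add1, mono_apply1]
    push_cast
    push_cast at hrec
    linarith
  -- representation of the gradient
  have hrep1 : ∀ x : Fin 2 → ℝ,
      eval x (pderiv 0 P)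
        = ((((e:ℂ)+2) * c) * ((x 0 : ℂ) + (x 1 : ℂ) * Complex.I) ^ (e+1)).re := by
    intro x
    have h := rep (e+1) (pderiv 0 P) (by omega) hhom1 hharm1 x
    rw [show e+1-1 = e from rfl, hc10, hc11,
      show ((e:ℝ)+1) * B / ((e+1 : ℕ) : ℝ) = B by
        have h1 : ((e:ℝ)+1) ≠ 0 := by positivity
        push_cast; field_simp] at h
    rw [h]
    congr 2
    rw [hc]
    push_cast
    field_simp
  have hrep2 : ∀ x : Fin 2 → ℝ,
      eval x (pderiv 1 P)
        = ((Complex.I * (((e:ℂ)+2) * c)) * ((x 0 : ℂ) + (x 1 : ℂ) * Complex.I) ^ (e+1)).re := by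
    intro x
    have h := rep (e+1) (pderiv 1 P) (by omega) hhom2 hharm2 x
    rw [show e+1-1 = e from rfl, hc20, hc21,
      show -((e:ℝ)+1) * ((e:ℝ)+2) * A / ((e+1 : ℕ) : ℝ) = -(((e:ℝ)+2) * A) by
        have h1 : ((e:ℝ)+1) ≠ 0 := by positivity
        push_cast; field_simp] at h
    rw [h]
    congr 2
    rw [hc]
    push_cast
    field_simp
    linear_combination (B:ℂ) * Complex.I_sq
  -- c is nonzero
  have hkey : ∀ (a r : ℝ), ((a:ℂ) - (r:ℂ)*Complex.I).re = a ∧ ((a:ℂ) - (r:ℂ)*Complex.I).im = -r := by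
    intro a r; constructor <;> simp
  have hcne : c ≠ 0 := by
    intro h0
    apply hP
    apply zero_of (e+2) P (by omega) hhom hharm
    · rw [← hA]
      have := (hkey A (B / ((e+2 : ℕ) : ℝ))).1
      rw [← hc, h0] at this
      simpa using this.symm
    · rw [show e+2-1 = e+1 from rfl, ← hB]
      have := (hkey A (B / ((e+2 : ℕ) : ℝ))).2
      rw [← hc, h0] at this
      have h2 : B / ((e+2 : ℕ) : ℝ) = 0 := by simpa using this.symm
      have h3 : ((e+2 : ℕ) : ℝ) ≠ 0 := by push_cast; positivity
      field_simp at h2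
      simpa using h2
  have hkey2 : ∀ (w : ℂ) (k : ℕ) (θ : ℝ), (w * Complex.exp ((θ:ℂ) * Complex.I) ^ k).re
      = ‖w‖ * Real.cos (w.arg + k * θ) := by
    intro w k θ
    conv_lhs => rw [← Complex.norm_mul_exp_arg_mul_I w]
    rw [← Complex.exp_nat_mul, mul_assoc, ← Complex.exp_add,
      show (w.arg : ℂ) * Complex.I + (k : ℂ) * ((θ:ℂ) * Complex.I)
          = ((w.arg + k * θ : ℝ) : ℂ) * Complex.I by push_cast; ring,
      Complex.re_ofReal_mul, Complex.exp_ofReal_mul_I_re]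
  set ψ := c.arg with hψ
  set ρ := ‖c‖ with hρ
  have hρpos : 0 < ρ := by rw [hρ]; exact norm_pos_iff.mpr hcne
  set θ₀ : ℝ := (Real.pi/2 - ψ)/((e:ℝ)+2) with hθ₀
  set θ₁ : ℝ := θ₀ + Real.pi/((e:ℝ)+2) with hθ₁
  set xv : ℝ → (Fin 2 → ℝ) := fun θ => ![Real.cos θ, Real.sin θ] with hxv
  have hz : ∀ θ : ℝ, ((xv θ 0 : ℝ):ℂ) + ((xv θ 1 : ℝ):ℂ) * Complex.I
      = Complex.exp ((θ:ℂ) * Complex.I) := by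
    intro θ
    rw [Complex.exp_mul_I]
    simp [hxv, Complex.ofReal_cos, Complex.ofReal_sin]
  have hevalP : ∀ θ : ℝ, eval (xv θ) P = ρ * Real.cos (ψ + ((e+2:ℕ):ℝ) * θ) := by
    intro θ
    rw [hrepP, hz, hkey2]
  have hang0 : ψ + ((e+2 : ℕ) : ℝ) * θ₀ = Real.pi/2 := by
    rw [hθ₀]; push_cast; field_simp; ring
  have hang1 : ψ + ((e+2 : ℕ) : ℝ) * θ₁ = Real.pi/2 + Real.pi := by
    rw [hθ₁, hθ₀]; push_cast; field_simp; ring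
  have hnod0 : eval (xv θ₀) P = 0 := by
    rw [hevalP, hang0, Real.cos_pi_div_two, mul_zero]
  have hnod1 : eval (xv θ₁) P = 0 := by
    rw [hevalP, hang1]
    simp [Real.cos_add]
  set W : ℝ → ℂ := fun θ => (((e:ℂ)+2) * c) * Complex.exp ((θ:ℂ) * Complex.I) ^ (e+1) with hW
  have hWg0 : ∀ θ, eval (xv θ) (pderiv 0 P) = (W θ).re := by
    intro θ; rw [hrep1, hz, hW]
  have hWg1 : ∀ θ, eval (xv θ) (pderiv 1 P) = -(W θ).im := by
    intro θ
    rw [hrep2, hz, hW]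
    rw [mul_assoc, Complex.I_mul_re]
  have hWne : ∀ θ, W θ ≠ 0 := fun θ =>
    mul_ne_zero (mul_ne_zero he2C hcne) (pow_ne_zero _ (Complex.exp_ne_zero _))
  have habs : ∀ θ, ‖W θ‖ = ((e:ℝ)+2) * ρ := by
    intro θ
    rw [hW]
    simp only [norm_mul, norm_pow, Complex.norm_exp_ofReal_mul_I, one_pow, mul_one]
    rw [show ((e:ℂ)+2) = ((e+2 : ℕ) : ℂ) by push_cast; ring, Complex.norm_natCast, hρ]
    push_cast; ring
  have hsqrt : ∀ θ, Real.sqrt (eval (xv θ) (pderiv 0 P) ^ 2 + eval (xv θ) (pderiv 1 P) ^ 2)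
      = ((e:ℝ)+2) * ρ := by
    intro θ
    rw [hWg0, hWg1, show (W θ).re^2 + (-(W θ).im)^2 = Complex.normSq (W θ) by
      rw [Complex.normSq_apply]; ring, ← Complex.norm_def, habs]
  have hdisj : ∀ θ, eval (xv θ) (pderiv 0 P) ≠ 0 ∨ eval (xv θ) (pderiv 1 P) ≠ 0 := by
    intro θ
    by_contra hcon
    push_neg at hcon
    have h1 := hcon.1
    have h2 := hcon.2
    rw [hWg0] at h1
    rw [hWg1] at h2
    exact hWne θ (Complex.ext (by simpa using h1) (by simpa [neg_eq_zero] using h2))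
  have H0 := hx (xv θ₀) hnod0 (hdisj θ₀)
  have H1 := hx (xv θ₁) hnod1 (hdisj θ₁)
  have hWeq : W θ₀ = W θ₁ := by
    apply Complex.ext
    · have a0 := H0 0
      have a1 := H1 0
      rw [hsqrt, hWg0] at a0 a1
      rw [a0, a1]
    · have a0 := H0 1
      have a1 := H1 1
      rw [hsqrt, hWg1] at a0 a1
      have := a0.trans a1.symm
      linarith
  have hexps : Complex.exp ((θ₀:ℂ) * Complex.I) ^ (e+1) = Complex.exp ((θ₁:ℂ) * Complex.I) ^ (e+1) :=
    mul_left_cancel₀ (mul_ne_zero he2C hcne) hWeq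
  rw [← Complex.exp_nat_mul, ← Complex.exp_nat_mul] at hexps
  obtain ⟨m, hm⟩ := Complex.exp_eq_exp_iff_exists_int.mp hexps
  have him := congrArg Complex.im hm
  push_cast at him
  simp [Complex.add_im, Complex.mul_im, Complex.mul_re] at him
  rw [hθ₁, show ((e:ℝ)+1)*(θ₀ + Real.pi/((e:ℝ)+2)) = ((e:ℝ)+1)*θ₀ + ((e:ℝ)+1)*(Real.pi/((e:ℝ)+2)) by ring] at him
  have h2 : ((e:ℝ)+1)*(Real.pi/((e:ℝ)+2)) + (m:ℝ)*(2*Real.pi) = 0 := by linarith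
  field_simp at h2
  exact Aux12.final_contra e m hπ (by linear_combination h2)
end

section
/- Let u : ℝ² → ℝ be harmonic with harmonic conjugate ū normalized by ū(0) = 0, and let γ : [0,1] → ℝ² be a C¹ curve with γ(0) = 0, γ(1) = z₀, such that for all t: u(γ(t)) = 0, ∇u(γ(t)) ≠ 0, |γ'(t)| ≠ 0 (so γ'(t) is parallel to J∇u(γ(t)), J being rotation by π/2), and the sign of γ'(t)·J∇u(γ(t)) is constant in t. Then ū(z₀) ≠ 0. -/
/-- Injectivity of the harmonic conjugate along nodal lines: if `u` is harmonic with
conjugate `ubar` (`∇ubar = J∇u`, `ubar(0) = 0`) and `γ` is a `C¹` curve from `0` to `z₀`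
inside the nodal set of `u`, with nonvanishing `∇u` and `γ'`, and with
`γ'·J∇u(γ)` of constant sign, then `ubar(z₀) ≠ 0`. -/
theorem statement_17 (u ubar : ℝ × ℝ → ℝ)
    (hu : ContDiff ℝ (⊤ : ℕ∞) u) (hubar : ContDiff ℝ (⊤ : ℕ∞) ubar)
    (hharm : ∀ p : ℝ × ℝ, lap u p = 0)
    (hCR : ∀ p : ℝ × ℝ, px ubar p = -(py u p) ∧ py ubar p = px u p)
    (h0 : ubar (0, 0) = 0)
    (z₀ : ℝ × ℝ) (γ γ' : ℝ → ℝ × ℝ)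
    (hγderiv : ∀ t ∈ Set.Icc (0 : ℝ) 1, HasDerivAt γ (γ' t) t)
    (hγ'cont : ContinuousOn γ' (Set.Icc (0 : ℝ) 1))
    (hγ0 : γ 0 = (0, 0)) (hγ1 : γ 1 = z₀)
    (hnodal : ∀ t ∈ Set.Icc (0 : ℝ) 1, u (γ t) = 0)
    (hgradne : ∀ t ∈ Set.Icc (0 : ℝ) 1, (px u (γ t), py u (γ t)) ≠ (0, 0))
    (hγ'ne : ∀ t ∈ Set.Icc (0 : ℝ) 1, γ' t ≠ 0)
    (hsign : (∀ t ∈ Set.Icc (0 : ℝ) 1,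
        0 < (γ' t).1 * (-(py u (γ t))) + (γ' t).2 * px u (γ t)) ∨
      (∀ t ∈ Set.Icc (0 : ℝ) 1,
        (γ' t).1 * (-(py u (γ t))) + (γ' t).2 * px u (γ t) < 0)) :
    ubar z₀ ≠ 0 := by
  have hderiv : ∀ t ∈ Set.Icc (0:ℝ) 1, HasDerivAt (fun s => ubar (γ s))
      ((γ' t).1 * (-(py u (γ t))) + (γ' t).2 * px u (γ t)) t := by
    intro t ht
    have hd := ((hubar.differentiable (by simp)) (γ t)).hasFDerivAt
    have h := hd.comp_hasDerivAt t (hγderiv t ht)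
    have heq : (fderiv ℝ ubar (γ t)) (γ' t)
        = (γ' t).1 * (-(py u (γ t))) + (γ' t).2 * px u (γ t) := by
      have hv : (γ' t) = (γ' t).1 • ((1:ℝ),(0:ℝ)) + (γ' t).2 • ((0:ℝ),(1:ℝ)) := by
        simp [Prod.ext_iff]
      rw [hv, map_add, map_smul, map_smul, smul_eq_mul, smul_eq_mul]
      have h1 := (hCR (γ t)).1
      have h2 := (hCR (γ t)).2
      simp only [px, py] at h1 h2 ⊢
      rw [h1, h2]
      simp
    rwa [heq] at h
  have hcont : ContinuousOn (fun s => ubar (γ s)) (Set.Icc 0 1) := fun t ht =>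
    ((hderiv t ht).continuousAt).continuousWithinAt
  have hmem0 : (0:ℝ) ∈ Set.Icc (0:ℝ) 1 := by norm_num
  have hmem1 : (1:ℝ) ∈ Set.Icc (0:ℝ) 1 := by norm_num
  have hderiveq : ∀ t ∈ interior (Set.Icc (0:ℝ) 1),
      deriv (fun s => ubar (γ s)) t
        = (γ' t).1 * (-(py u (γ t))) + (γ' t).2 * px u (γ t) := by
    intro t ht
    rw [interior_Icc] at ht
    exact (hderiv t (Set.Ioo_subset_Icc_self ht)).deriv
  rcases hsign with hpos | hneg
  · have hmono : StrictMonoOn (fun s => ubar (γ s)) (Set.Icc 0 1) := by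
      apply strictMonoOn_of_deriv_pos (convex_Icc 0 1) hcont
      intro t ht
      rw [hderiveq t ht]
      rw [interior_Icc] at ht
      exact hpos t (Set.Ioo_subset_Icc_self ht)
    have := hmono hmem0 hmem1 (by norm_num)
    simp only [hγ0, hγ1, h0] at this
    exact ne_of_gt this
  · have hmono : StrictAntiOn (fun s => ubar (γ s)) (Set.Icc 0 1) := by
      apply strictAntiOn_of_deriv_neg (convex_Icc 0 1) hcont
      intro t ht
      rw [hderiveq t ht]
      rw [interior_Icc] at ht
      exact hneg t (Set.Ioo_subset_Icc_self ht)
    have := hmono hmem0 hmem1 (by norm_num)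
    simp only [hγ0, hγ1, h0] at this
    exact ne_of_lt this
end
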